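/- For all real numbers A > 1 and B > 0, the sum ∑_{k=1}^∞ A^k e^{-B·2^k} is at most (2 ln(A)/(B·e·ln 2))^{ln(A)/ln(2)} · (1/B). -/

import Mathlib

open Real

lemma core_bound (c b x : ℝ) (hc : 0 < c) (hb : 0 < b) (hx : 0 < x) :
    x ^ c * Real.exp (-(b * x)) ≤ (c / (b * Real.exp 1)) ^ c := by
  rw [Real.rpow_def_of_pos hx, Real.rpow_def_of_pos (by positivity), ← Real.exp_add,
    Real.exp_le_exp]
  have h1 : Real.log (x * b / c) ≤ x * b / c - 1 :=
    Real.log_le_sub_one_of_pos (by positivity)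
  have h2 : Real.log (x * b / c) = Real.log x + Real.log b - Real.log c := by
    rw [Real.log_div (by positivity) hc.ne', Real.log_mul hx.ne' hb.ne']
  have h3 : Real.log (c / (b * Real.exp 1)) = Real.log c - Real.log b - 1 := by
    rw [Real.log_div hc.ne' (by positivity), Real.log_mul hb.ne' (Real.exp_pos 1).ne',
      Real.log_exp]
    ring
  have h4 := mul_le_mul_of_nonneg_left h1 hc.le
  have h5 : c * (x * b / c) = x * b := by field_simp
  rw [h2] at h4
  rw [h3]
  nlinarith

theorem sum_A_pow_exp_le (A B : ℝ) (hA : 1 < A) (hB : 0 < B) :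
    ∑' k : ℕ, A ^ (k + 1) * Real.exp (-B * 2 ^ (k + 1)) ≤
      (2 * Real.log A / (B * Real.exp 1 * Real.log 2)) ^ (Real.log A / Real.log 2) * (1 / B) := by
  have hlog2 : 0 < Real.log 2 := Real.log_pos one_lt_two
  have hlogA : 0 < Real.log A := Real.log_pos hA
  set c : ℝ := Real.log A / Real.log 2 with hc_def
  have hc : 0 < c := div_pos hlogA hlog2
  set M : ℝ := (2 * Real.log A / (B * Real.exp 1 * Real.log 2)) ^ c with hM_def
  have hMeq : M = (c / (B / 2 * Real.exp 1)) ^ c := by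
    rw [hM_def]
    congr 1
    rw [hc_def]
    field_simp
  have hM0 : 0 ≤ M := by
    rw [hMeq]; exact Real.rpow_nonneg (by positivity) _
  set r : ℝ := Real.exp (-B) with hr_def
  have hr0 : 0 < r := Real.exp_pos _
  have hr1 : r < 1 := by
    rw [hr_def]
    calc Real.exp (-B) < Real.exp 0 := Real.exp_lt_exp.mpr (by linarith)
      _ = 1 := Real.exp_zero
  have key : ∀ k : ℕ, A ^ (k + 1) * Real.exp (-B * 2 ^ (k + 1)) ≤ M * r ^ (k + 1) := by
    intro k
    have hx : (0:ℝ) < 2 ^ (k + 1) := by positivity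
    have hAn : A ^ (k + 1) = ((2:ℝ) ^ (k + 1)) ^ c := by
      rw [Real.rpow_def_of_pos hx, hc_def]
      have h2n : Real.log ((2:ℝ) ^ (k + 1)) = (k + 1 : ℕ) * Real.log 2 := Real.log_pow _ _
      rw [h2n]
      rw [show (k + 1 : ℕ) * Real.log 2 * (Real.log A / Real.log 2)
          = (k + 1 : ℕ) * Real.log A by field_simp]
      rw [Real.exp_nat_mul, Real.exp_log (by linarith)]
    have hsplit : Real.exp (-B * 2 ^ (k + 1))
        = Real.exp (-(B / 2 * 2 ^ (k + 1))) * Real.exp (-(B / 2 * 2 ^ (k + 1))) := by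
      rw [← Real.exp_add]; ring_nf
    have h1 : ((2:ℝ) ^ (k + 1)) ^ c * Real.exp (-(B / 2 * 2 ^ (k + 1))) ≤ M := by
      rw [hMeq]
      exact core_bound c (B / 2) _ hc (by linarith) hx
    have h2 : Real.exp (-(B / 2 * 2 ^ (k + 1))) ≤ r ^ (k + 1) := by
      have hnat : (k + 1 : ℕ) ≤ 2 ^ k := Nat.lt_two_pow_self
      have hreal : ((k:ℝ) + 1) ≤ 2 ^ k := by
        have : ((k + 1 : ℕ) : ℝ) ≤ ((2 ^ k : ℕ) : ℝ) := Nat.cast_le.mpr hnat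
        push_cast at this
        linarith
      rw [hr_def, ← Real.exp_nat_mul, Real.exp_le_exp]
      have h2k : (2:ℝ) ^ (k + 1) = 2 * 2 ^ k := by ring
      push_cast
      nlinarith [hB.le]
    calc A ^ (k + 1) * Real.exp (-B * 2 ^ (k + 1))
        = ((2:ℝ) ^ (k + 1)) ^ c * Real.exp (-(B / 2 * 2 ^ (k + 1)))
          * Real.exp (-(B / 2 * 2 ^ (k + 1))) := by rw [hAn, hsplit]; ring
      _ ≤ M * r ^ (k + 1) :=
          mul_le_mul h1 h2 (Real.exp_pos _).le hM0
  have hsumR : Summable (fun k : ℕ => M * r ^ (k + 1)) := by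
    have : (fun k : ℕ => M * r ^ (k + 1)) = fun k : ℕ => (M * r) * r ^ k := by
      funext k; ring
    rw [this]
    exact (summable_geometric_of_lt_one hr0.le hr1).mul_left _
  have hsumL : Summable (fun k : ℕ => A ^ (k + 1) * Real.exp (-B * 2 ^ (k + 1))) := by
    refine Summable.of_nonneg_of_le (fun k => by positivity) key hsumR
  calc ∑' k : ℕ, A ^ (k + 1) * Real.exp (-B * 2 ^ (k + 1))
      ≤ ∑' k : ℕ, M * r ^ (k + 1) := hsumL.tsum_le_tsum key hsumR
    _ = M * r * (1 - r)⁻¹ := by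
        rw [show (fun k : ℕ => M * r ^ (k + 1)) = fun k : ℕ => (M * r) * r ^ k by
          funext k; ring]
        rw [tsum_mul_left, tsum_geometric_of_lt_one hr0.le hr1]
    _ ≤ M * (1 / B) := by
        have hB1 : B + 1 ≤ Real.exp B := by
          have := Real.add_one_le_exp B; linarith
        have hre : r * Real.exp B = 1 := by
          rw [hr_def, ← Real.exp_add]; simp
        have h : r * (1 - r)⁻¹ ≤ 1 / B := by
          rw [show r * (1 - r)⁻¹ = r / (1 - r) from (div_eq_mul_inv r _).symm,
            div_le_div_iff₀ (by linarith) hB]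
          nlinarith [hB1, hr0.le]
        calc M * r * (1 - r)⁻¹ = M * (r * (1 - r)⁻¹) := by ring
          _ ≤ M * (1 / B) := mul_le_mul_of_nonneg_left h hM0
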